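/- arXiv:1304.0634 — 3 statements merged into one kernel-verified Lean document; each statement's English description precedes it below -/
import Mathlib

section
/- Let L be an algebraically closed field of characteristic zero and let f ∈ L[x_1,…,x_n] have degree d ≥ 2. Suppose f has nonzero terms only in degrees 0, 1 and d, that x_1 − c divides f for some nonzero c ∈ L, and that f is nonsingular, i.e., f and its partial derivatives ∂f/∂x_1,…,∂f/∂x_n have no common zero in L^n. Then f = c'(x_1^d − c^d) + (c'' − c'·d·c^{d−1})(x_1 − c) for some nonzero c', c'' ∈ L. -/
/-!
Write `f = f₀ + f₁ + f_d` for its homogeneous components and `u = x₁ / c`. The polynomial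
`f_d + f₀ u^d + f₁ u^(d-1)` is homogeneous of degree `d` and agrees with `f` on the
hyperplane `x₁ = c`, where `f` vanishes; by homogeneity it then vanishes wherever `x₁ ≠ 0`,
hence is zero. So `f = f₀ (1 - u^d) + f₁ (1 - u^(d-1))`, and on the hyperplane `x₁ = c` the
only partial derivative of `f` that can survive is `∂f/∂x₁ = -(d f₀ + (d - 1) f₁) / c`.
Nonsingularity says this never vanishes there, which forces the linear form `f₁` to be a
multiple of `x₁`; what is left is a polynomial in `x₁` alone, of the stated shape.
-/

open MvPolynomial

namespace MvPolynomial

variable {σ R K : Type*}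

section CommRing

variable [CommRing R] {f : MvPolynomial σ R} {i : σ} {c : R} {a : σ → R}

theorem eval_eq_zero_of_X_sub_C_dvd (h : X i - C c ∣ f) (ha : a i = c) : eval a f = 0 := by
  obtain ⟨g, rfl⟩ := h
  simp [ha]

theorem eval_pderiv_eq_zero_of_X_sub_C_dvd {j : σ} (h : X i - C c ∣ f) (hj : j ≠ i)
    (ha : a i = c) : eval a (pderiv j f) = 0 := by
  obtain ⟨g, rfl⟩ := h
  simp [ha, pderiv_X_of_ne hj.symm]

theorem eval_pderiv_ne_zero_of_X_sub_C_dvd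
    (hns : ¬ ∃ a : σ → R, eval a f = 0 ∧ ∀ j, eval a (pderiv j f) = 0)
    (h : X i - C c ∣ f) (ha : a i = c) : eval a (pderiv i f) ≠ 0 := fun h0 ↦
  hns ⟨a, eval_eq_zero_of_X_sub_C_dvd h ha, fun j ↦ by
    rcases eq_or_ne j i with rfl | hj
    exacts [h0, eval_pderiv_eq_zero_of_X_sub_C_dvd h hj ha]⟩

end CommRing

theorem IsHomogeneous.eval_smul [CommSemiring R] {φ : MvPolynomial σ R} {n : ℕ}
    (hφ : φ.IsHomogeneous n) (r : R) (x : σ → R) :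
    eval (r • x) φ = r ^ n * eval x φ := by
  rw [eval_eq, eval_eq, Finset.mul_sum]
  refine Finset.sum_congr rfl fun m hm ↦ ?_
  have hdeg : ∑ j ∈ m.support, m j = n := by
    rw [← hφ (mem_support_iff.mp hm), Finsupp.weight_apply, Finsupp.sum]
    simp
  simp only [Pi.smul_apply, smul_eq_mul, mul_pow, Finset.prod_mul_distrib,
    Finset.prod_pow_eq_pow_sum, hdeg]
  ring

theorem IsHomogeneous.eq_zero_of_forall_eval_eq_zero_of_apply_eq [Field K] [Infinite K]
    {φ : MvPolynomial σ K} {n : ℕ} (hφ : φ.IsHomogeneous n) {i : σ} {c : K} (hc : c ≠ 0)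
    (h : ∀ a : σ → K, a i = c → eval a φ = 0) : φ = 0 := by
  suffices X i * φ = 0 from (mul_eq_zero.mp this).resolve_left (X_ne_zero i)
  refine MvPolynomial.funext fun x ↦ ?_
  rcases eq_or_ne (x i) 0 with hx | hx
  · simp [hx]
  · have := h ((c / x i) • x) (by simp [hx])
    rw [hφ.eval_smul] at this
    simpa [hx, hc] using this

theorem IsHomogeneous.exists_eq_C_mul_X_of_forall_eval_ne [Field K] [Fintype σ] [DecidableEq σ]
    {φ : MvPolynomial σ K} (hφ : φ.IsHomogeneous 1) {i : σ} {c v : K}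
    (h : ∀ a : σ → K, a i = c → eval a φ ≠ v) : ∃ b, φ = C b * X i := by
  have hmem : φ ∈ Submodule.span K (Set.range X) := by
    rw [← homogeneousSubmodule_one_eq_span_X]
    exact hφ
  obtain ⟨w, rfl⟩ := (Submodule.mem_span_range_iff_exists_fun K).mp hmem
  have hw : ∀ j ≠ i, w j = 0 := by
    intro j hj
    by_contra hwj
    refine h (Pi.single i c + Pi.single j ((v - w i * c) / w j)) (by simp [hj.symm]) ?_
    simp only [smul_eq_C_mul, map_sum, map_mul, eval_C, eval_X, Pi.add_apply, Pi.single_apply,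
      mul_add, mul_ite, mul_zero, Finset.sum_add_distrib, Finset.sum_ite_eq', Finset.mem_univ,
      ↓reduceIte]
    rw [mul_div_cancel₀ _ hwj]
    ring
  refine ⟨w i, ?_⟩
  rw [Finset.sum_eq_single i (fun j _ hj ↦ by rw [hw j hj, zero_smul]) (by simp), smul_eq_C_mul]

theorem eq_C_mul_one_sub_pow_add_of_X_sub_C_dvd [Field K] [Infinite K] {f : MvPolynomial σ K}
    {d : ℕ} (hd : 1 ≤ d)
    (hterms : f = homogeneousComponent 0 f + homogeneousComponent 1 f + homogeneousComponent d f)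
    {i : σ} {c : K} (hc : c ≠ 0) (hdvd : X i - C c ∣ f) :
    f = C (coeff 0 f) * (1 - (C c⁻¹ * X i) ^ d)
      + homogeneousComponent 1 f * (1 - (C c⁻¹ * X i) ^ (d - 1)) := by
  rw [homogeneousComponent_zero] at hterms
  set ℓ := homogeneousComponent 1 f
  set u : MvPolynomial σ K := C c⁻¹ * X i
  have hu : u.IsHomogeneous 1 := isHomogeneous_C_mul_X _ _
  have hH :
      (homogeneousComponent d f + C (coeff 0 f) * u ^ d + ℓ * u ^ (d - 1)).IsHomogeneous d := by
    refine ((homogeneousComponent_isHomogeneous d f).add ?_).add ?_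
    · simpa using (hu.pow d).C_mul (coeff 0 f)
    · simpa [show 1 + (d - 1) = d by omega] using
        (homogeneousComponent_isHomogeneous 1 f).mul (hu.pow (d - 1))
  have hH0 := hH.eq_zero_of_forall_eval_eq_zero_of_apply_eq hc fun a ha ↦ by
    have hfa := eval_eq_zero_of_X_sub_C_dvd hdvd ha
    rw [hterms, map_add, map_add, eval_C] at hfa
    simp only [map_add, map_mul, eval_C, map_pow, eval_X, ha, inv_mul_cancel₀ hc, one_pow,
      mul_one, u]
    linear_combination hfa
  linear_combination hterms + hH0

theorem eval_pderiv_C_mul_one_sub_pow_add [Field K] {A c : K} {ℓ : MvPolynomial σ K} {d : ℕ}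
    {i : σ} {a : σ → K} (hc : c ≠ 0) (ha : a i = c) :
    eval a (pderiv i (C A * (1 - (C c⁻¹ * X i) ^ d) + ℓ * (1 - (C c⁻¹ * X i) ^ (d - 1))))
      = -(d * A + (d - 1 : ℕ) * eval a ℓ) / c := by
  simp only [map_add, Derivation.leibniz, map_sub, Derivation.map_one_eq_zero,
    Derivation.leibniz_pow, pderiv_X_self, smul_eq_mul, mul_one, derivation_C, mul_zero, add_zero,
    nsmul_eq_mul, zero_sub, mul_neg, map_neg, map_mul, eval_C, map_natCast, map_pow, eval_X, ha,
    inv_mul_cancel₀ hc, one_pow, one_mul, map_one, sub_self, zero_mul, neg_add_rev]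
  field_simp
  ring

theorem C_mul_one_sub_pow_add_C_mul_X_mul_one_sub_pow [Field K] (A b : K) {c : K} (hc : c ≠ 0)
    (i : σ) {d : ℕ} (hd : 1 ≤ d) :
    C A * (1 - (C c⁻¹ * X i) ^ d) + C b * X i * (1 - (C c⁻¹ * X i) ^ (d - 1))
      = C (-(A + c * b) / c ^ d) * (X i ^ d - C (c ^ d)) + C b * (X i - C c) := by
  obtain ⟨e, rfl⟩ : ∃ e, d = e + 1 := ⟨d - 1, by omega⟩
  have h : C c * C c⁻¹ = (1 : MvPolynomial σ K) := by rw [← C_mul, mul_inv_cancel₀ hc, C_1]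
  have h' : (C c * C c⁻¹) ^ (e + 1) = (1 : MvPolynomial σ K) := by rw [h, one_pow]
  rw [div_eq_mul_inv, ← inv_pow, Nat.add_sub_cancel]
  simp only [map_mul, map_neg, map_add, map_pow, mul_pow]
  linear_combination C b * C c⁻¹ ^ e * X i ^ (e + 1) * h - (C A + C c * C b) * h'

theorem totalDegree_C_mul_X_sub_C_le [CommRing R] (b c : R) (i : σ) :
    (C b * (X i - C c)).totalDegree ≤ 1 := by
  rw [mul_sub, ← C_mul]
  exact (totalDegree_sub _ _).trans
    (max_le (isHomogeneous_C_mul_X _ _).totalDegree_le (by rw [totalDegree_C]; omega))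

end MvPolynomial

theorem nonsingular_three_term_with_linear_factor_general
    {L : Type*} [Field L] [CharZero L] {n : ℕ}
    (f : MvPolynomial (Fin (n + 1)) L) (d : ℕ) (hd : 2 ≤ d)
    (hdeg : f.totalDegree = d)
    (hterms : f = homogeneousComponent 0 f + homogeneousComponent 1 f
        + homogeneousComponent d f)
    (c : L) (hc : c ≠ 0) (hdvd : (X 0 - C c) ∣ f)
    (hns : ¬ ∃ a : Fin (n + 1) → L, eval a f = 0 ∧ ∀ j, eval a (pderiv j f) = 0) :
    ∃ c' c'' : L, c' ≠ 0 ∧ c'' ≠ 0 ∧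
      f = C c' * (X 0 ^ d - C (c ^ d)) + C (c'' - c' * (d : L) * c ^ (d - 1)) * (X 0 - C c) := by
  have hf := eq_C_mul_one_sub_pow_add_of_X_sub_C_dvd (by omega) hterms hc hdvd
  set A := coeff 0 f
  set ℓ := homogeneousComponent 1 f
  have hne : ∀ a : Fin (n + 1) → L, a 0 = c → (d : L) * A + (d - 1 : ℕ) * eval a ℓ ≠ 0 := by
    intro a ha h0
    apply eval_pderiv_ne_zero_of_X_sub_C_dvd hns hdvd ha
    rw [hf, eval_pderiv_C_mul_one_sub_pow_add hc ha, h0, neg_zero, zero_div]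
  have hd1 : ((d - 1 : ℕ) : L) ≠ 0 := by exact_mod_cast (by omega : d - 1 ≠ 0)
  obtain ⟨b, hb⟩ : ∃ b, ℓ = C b * X 0 :=
    (homogeneousComponent_isHomogeneous 1 f).exists_eq_C_mul_X_of_forall_eval_ne (c := c)
      (v := -(d * A) / (d - 1 : ℕ)) fun a ha h ↦ hne a ha (by rw [h]; field_simp; ring)
  set c' := -(A + c * b) / c ^ d
  have hform : f = C c' * (X 0 ^ d - C (c ^ d)) + C b * (X 0 - C c) := by
    rw [hf, hb, C_mul_one_sub_pow_add_C_mul_X_mul_one_sub_pow A b hc 0 (by omega)]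
  -- `c''` is the value of `∂f/∂x₁` on the hyperplane `x₁ = c`.
  refine ⟨c', -(d * A + (d - 1 : ℕ) * (b * c)) / c, fun h0 ↦ ?_, ?_, ?_⟩
  · have hle : f.totalDegree ≤ 1 := by
      rw [hform, h0, C_0, zero_mul, zero_add]
      exact totalDegree_C_mul_X_sub_C_le b c 0
    omega
  · have hb0 := hne (fun _ ↦ c) rfl
    rw [hb, map_mul, eval_C, eval_X] at hb0
    exact div_ne_zero (neg_ne_zero.mpr hb0) hc
  · rw [hform]
    obtain ⟨e, rfl⟩ : ∃ e, d = e + 1 := ⟨d - 1, by omega⟩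
    congr 3
    simp only [c', Nat.add_sub_cancel, Nat.cast_add, Nat.cast_one]
    field_simp
    ring

/-- Corollary (nonsingular): if `f` has terms only in degrees `0, 1, d` with `d ≥ 2`,
`x₁ - c ∣ f` for some nonzero `c`, and `f` is nonsingular, then
`f = c'(x₁^d - c^d) + (c'' - c'·d·c^(d-1))(x₁ - c)` for some nonzero `c', c''`. -/
theorem nonsingular_three_term_with_linear_factor
    {L : Type*} [Field L] [IsAlgClosed L] [CharZero L] {n : ℕ}
    (f : MvPolynomial (Fin (n + 1)) L) (d : ℕ) (hd : 2 ≤ d)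
    (hdeg : f.totalDegree = d)
    (hterms : f = homogeneousComponent 0 f + homogeneousComponent 1 f
        + homogeneousComponent d f)
    (c : L) (hc : c ≠ 0) (hdvd : (X 0 - C c) ∣ f)
    (hns : ¬ ∃ a : Fin (n + 1) → L, eval a f = 0 ∧ ∀ j, eval a (pderiv j f) = 0) :
    ∃ c' c'' : L, c' ≠ 0 ∧ c'' ≠ 0 ∧
      f = C c' * (X 0 ^ d - C (c ^ d)) + C (c'' - c' * (d : L) * c ^ (d - 1)) * (X 0 - C c) :=
  nonsingular_three_term_with_linear_factor_general f d hd hdeg hterms c hc hdvd hns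
end

section
/- Let K be a field of characteristic zero and let f ∈ K[x_1,…,x_n] be nonzero with a factorization f = g·h such that h(0) ≠ 0. Let g* ∈ K[x]. If g* divides the degree-k homogeneous component f^{(k)} of f for every k = 0, 1, …, deg g, then g* divides g. -/
/-!
Since `h(0)` is a unit, `h` has an inverse `P` modulo the `(deg g + 1)`-th power of the ideal of
variables. Then `g ≡ f * P` modulo monomials of degree `> deg g`, and every homogeneous component
of `f * P` of degree `≤ deg g` is a sum of multiples of components of `f` of degree `≤ deg g`,
hence divisible by `g*`. So are the components of `g`, and therefore `g` itself.
-/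

open MvPolynomial

namespace MvPolynomial

variable {σ R : Type*}

section CommSemiring

variable [CommSemiring R]

lemma homogeneousComponent_eq_zero_of_mem_pow_idealOfVars {p : MvPolynomial σ R} {N k : ℕ}
    (hp : p ∈ idealOfVars σ R ^ N) (hk : k < N) : homogeneousComponent k p = 0 := by
  ext m
  rw [coeff_homogeneousComponent, coeff_zero]
  split_ifs with hm
  · exact (mem_pow_idealOfVars_iff' N p).1 hp m (hm ▸ hk)
  · rfl

lemma mem_idealOfVars_of_constantCoeff_eq_zero {p : MvPolynomial σ R}
    (hp : constantCoeff p = 0) : p ∈ idealOfVars σ R := by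
  rw [← pow_one (idealOfVars σ R), mem_pow_idealOfVars_iff']
  intro m hm
  rwa [(Finsupp.degree_eq_zero_iff m).1 (Nat.lt_one_iff.1 hm)]

lemma dvd_homogeneousComponent_mul {a p : MvPolynomial σ R} {k : ℕ}
    (hp : ∀ i ≤ k, a ∣ homogeneousComponent i p) (q : MvPolynomial σ R) :
    a ∣ homogeneousComponent k (p * q) := by
  conv_rhs => rw [← sum_homogeneousComponent p, ← sum_homogeneousComponent q]
  simp only [Finset.sum_mul_sum, map_sum]
  refine Finset.dvd_sum fun i _ => Finset.dvd_sum fun j _ => ?_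
  rw [homogeneousComponent_of_mem
    ((homogeneousComponent_isHomogeneous i p).mul (homogeneousComponent_isHomogeneous j q))]
  split_ifs with hij
  · exact (hp i (by omega)).mul_right _
  · exact dvd_zero _

lemma dvd_of_forall_dvd_homogeneousComponent {a p : MvPolynomial σ R}
    (h : ∀ k ≤ p.totalDegree, a ∣ homogeneousComponent k p) : a ∣ p := by
  rw [← sum_homogeneousComponent p]
  exact Finset.dvd_sum fun k hk => h k (Nat.lt_succ_iff.1 (Finset.mem_range.1 hk))

end CommSemiring

lemma exists_mul_sub_one_mem_pow_idealOfVars [CommRing R] {h : MvPolynomial σ R}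
    (hh : IsUnit (constantCoeff h)) (N : ℕ) :
    ∃ P : MvPolynomial σ R, h * P - 1 ∈ idealOfVars σ R ^ N := by
  obtain ⟨c, hc⟩ := hh
  set u := 1 - C (↑c⁻¹ : R) * h
  have hu : u ∈ idealOfVars σ R := by
    refine mem_idealOfVars_of_constantCoeff_eq_zero ?_
    simp [u, ← hc]
  -- `h = c (1 - u)`, so the truncated geometric series `c⁻¹ ∑_{i<N} u^i` inverts `h` up to `u^N`.
  refine ⟨C (↑c⁻¹ : R) * ∑ i ∈ Finset.range N, u ^ i, ?_⟩
  have hP : h * (C (↑c⁻¹ : R) * ∑ i ∈ Finset.range N, u ^ i) - 1 = -u ^ N := by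
    rw [← mul_assoc, mul_comm h, show C (↑c⁻¹ : R) * h = 1 - u by ring, mul_neg_geom_sum]
    ring
  rw [hP]
  exact neg_mem (Ideal.pow_mem_pow hu N)

end MvPolynomial

theorem dvd_factor_of_dvd_low_homogeneous_components_general
    {K : Type*} [Field K] {n : ℕ}
    (f g h gstar : MvPolynomial (Fin n) K)
    (hfgh : f = g * h) (hh0 : constantCoeff h ≠ 0)
    (hdvd : ∀ k ≤ g.totalDegree, gstar ∣ homogeneousComponent k f) :
    gstar ∣ g := by
  obtain ⟨P, hP⟩ :=
    exists_mul_sub_one_mem_pow_idealOfVars (isUnit_iff_ne_zero.2 hh0) (g.totalDegree + 1)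
  refine dvd_of_forall_dvd_homogeneousComponent fun k hk => ?_
  have hg : g = f * P - g * (h * P - 1) := by rw [hfgh]; ring
  have hhigh : homogeneousComponent k (g * (h * P - 1)) = 0 :=
    homogeneousComponent_eq_zero_of_mem_pow_idealOfVars (Ideal.mul_mem_left _ g hP) (by omega)
  rw [hg, map_sub, hhigh, sub_zero]
  exact dvd_homogeneousComponent_mul (fun i hi => hdvd i (hi.trans hk)) P

/-- Lemma (x_1|flem): if `f = g·h` is nonzero with `h(0) ≠ 0`, and `g*` divides the
homogeneous components of `f` of degrees `0, 1, …, deg g`, then `g* ∣ g`. -/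
theorem dvd_factor_of_dvd_low_homogeneous_components
    {K : Type*} [Field K] [CharZero K] {n : ℕ}
    (f g h gstar : MvPolynomial (Fin n) K)
    (hf : f ≠ 0) (hfgh : f = g * h) (hh0 : constantCoeff h ≠ 0)
    (hdvd : ∀ k ≤ g.totalDegree, gstar ∣ homogeneousComponent k f) :
    gstar ∣ g :=
  dvd_factor_of_dvd_low_homogeneous_components_general f g h gstar hfgh hh0 hdvd
end

section
/- Let K be a field of characteristic zero and let F = (F_1,…,F_n) ∈ K[x_1,…,x_n]^n be a Keller map whose Jacobian matrix jac F is symmetric. If for some index i there are c, c' ∈ K and h ∈ K[x] such that F_i = c'·x_i + x_i²·h + c, then h = 0. -/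
/-!
Write `t = xᵢ` and `J = jac F`. If `t ^ k ∣ h`, symmetry makes the off-diagonal entries
`∂ᵢFⱼ = ∂ⱼFᵢ = t² ∂ⱼh` of the `i`-th column of `J` divisible by `t ^ (k + 2)`, and hence `∂ᵢ` of
every entry outside row `i` divisible by `t ^ (k + 1)`. Differentiating the cofactor expansion of
the constant `det J` along column `i` forces `t ^ (k + 1) ∣ ∂ᵢ² Fᵢ = ∂ᵢ² (t ^ (k + 2) g)` with
`h = t ^ k g`. The lowest-order term of the latter in `t` is `(k + 2)(k + 1) t ^ k g`, so in
characteristic zero `t ∣ g`. Thus `h` is divisible by every power of `t`.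
-/

open MvPolynomial

namespace Derivation

variable {S R : Type*} [CommSemiring S] [CommRing R] [Algebra S R] (D : Derivation S R R)

theorem pow_dvd_map_of_pow_succ_dvd {a q : R} {m : ℕ} (h : a ^ (m + 1) ∣ q) : a ^ m ∣ D q := by
  obtain ⟨g, rfl⟩ := h
  rw [leibniz, leibniz_pow, Nat.add_sub_cancel, smul_eq_mul, smul_eq_mul, smul_eq_mul,
    nsmul_eq_mul]
  exact dvd_add ((pow_dvd_pow a m.le_succ).mul_right _)
    (dvd_mul_of_dvd_right (dvd_mul_of_dvd_right (dvd_mul_right _ _) _) _)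

theorem dvd_map_det {ι : Type*} [Fintype ι] [DecidableEq ι] {p : R} (M : Matrix ι ι R)
    (h : ∀ j k, p ∣ D (M j k)) : p ∣ D M.det := by
  rw [Matrix.det_apply, map_sum]
  refine Finset.dvd_sum fun τ _ => ?_
  rw [Units.smul_def, map_zsmul, zsmul_eq_mul]
  refine dvd_mul_of_dvd_right ?_ _
  refine Finset.prod_induction _ (fun x => p ∣ D x) (fun x y hx hy => ?_) (by simp)
    fun j _ => h _ _
  rw [leibniz, smul_eq_mul, smul_eq_mul]
  exact dvd_add (hy.mul_left x) (hx.mul_left y)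

/-- Differentiating the cofactor expansion `det A = cof · Aᵢᵢ + W` along column `i` gives
`a ^ m ∣ cof · D Aᵢᵢ`; as `cof · Aᵢᵢ ≡ det A` modulo `a`, the unit `det A` can then be cancelled. -/
theorem pow_dvd_map_diag_of_isUnit_det {ι : Type*} [Fintype ι] [DecidableEq ι]
    (A : Matrix ι ι R) (hunit : IsUnit A.det) (hconst : D A.det = 0) {a : R} {m : ℕ} (i : ι)
    (hcol : ∀ j ≠ i, a ^ (m + 1) ∣ A j i) (hrow : ∀ j ≠ i, ∀ l, a ^ m ∣ D (A j l)) :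
    a ^ m ∣ D (A i i) := by
  set cof := A.adjugate i i
  set W := ∑ j ∈ Finset.univ.erase i, A.adjugate i j * A j i
  have hexp : cof * A i i + W = A.det := by
    refine (Finset.add_sum_erase _ (fun j => A.adjugate i j * A j i) (Finset.mem_univ i)).trans ?_
    rw [← Matrix.mul_apply, Matrix.adjugate_mul, Matrix.smul_apply, Matrix.one_apply_eq,
      smul_eq_mul, mul_one]
  have hW : a ^ (m + 1) ∣ W :=
    Finset.dvd_sum fun j hj => (hcol j (Finset.ne_of_mem_erase hj)).mul_left _
  have hcof : a ^ m ∣ D cof := by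
    rw [show cof = _ from A.adjugate_apply i i]
    refine D.dvd_map_det _ fun j l => ?_
    rcases eq_or_ne j i with rfl | hj
    · rw [Matrix.updateRow_self]
      rcases eq_or_ne l j with rfl | hl
      · simp
      · simp [hl]
    · rw [Matrix.updateRow_ne hj]
      exact hrow j hj l
  have hcof_diag : a ^ m ∣ cof * D (A i i) := by
    have hD := congrArg D hexp
    rw [hconst, map_add, leibniz, smul_eq_mul, smul_eq_mul, add_assoc, add_eq_zero_iff_eq_neg]
      at hD
    rw [hD, dvd_neg]
    exact dvd_add (hcof.mul_left _) (D.pow_dvd_map_of_pow_succ_dvd hW)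
  rw [← hunit.dvd_mul_left, ← hexp,
    show (cof * A i i + W) * D (A i i) = A i i * (cof * D (A i i)) + W * D (A i i) by ring]
  exact dvd_add (hcof_diag.mul_left _) (((pow_dvd_pow a m.le_succ).trans hW).mul_right _)

end Derivation

namespace MvPolynomial

variable {σ K : Type*}

theorem pderiv_pderiv_comm {R : Type*} [CommRing R] (i j : σ) (p : MvPolynomial σ R) :
    pderiv i (pderiv j p) = pderiv j (pderiv i p) := by
  classical
  have : ⁅pderiv i, pderiv j⁆ = (0 : Derivation R (MvPolynomial σ R) _) :=
    derivation_ext fun k => by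
      rw [Derivation.commutator_apply]
      simp [pderiv_X, Pi.single_apply, apply_ite]
  rw [← sub_eq_zero, ← Derivation.commutator_apply, this, Derivation.zero_apply]

variable [Field K]

theorem eq_zero_of_forall_X_pow_dvd {i : σ} {p : MvPolynomial σ K} (h : ∀ k, X i ^ k ∣ p) :
    p = 0 := by
  by_contra hp
  obtain ⟨k, hk⟩ := FiniteMultiplicity.of_not_isUnit (X_prime (R := K) (i := i)).not_isUnit hp
  exact hk (h (k + 1))

theorem pderiv_eq_zero_of_isUnit {p : MvPolynomial σ K} (hp : IsUnit p) (i : σ) :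
    pderiv i p = 0 := by
  obtain ⟨r, -, rfl⟩ := isUnit_iff_eq_C_of_isReduced.mp hp
  exact pderiv_C

variable [CharZero K]

theorem X_dvd_of_X_pow_succ_dvd_pderiv {i : σ} {m : ℕ} {u : MvPolynomial σ K}
    (h : X i ^ (m + 1) ∣ pderiv i (X i ^ (m + 1) * u)) : X i ∣ u := by
  have hunit : IsUnit ((m + 1 : ℕ) : MvPolynomial σ K) := by
    rw [← map_natCast C]
    exact (Nat.cast_ne_zero.mpr m.succ_ne_zero).isUnit.map C
  rwa [pderiv_mul, pderiv_pow, pderiv_X_self, mul_one, Nat.add_sub_cancel,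
    dvd_add_left (dvd_mul_right _ _), pow_succ, mul_right_comm, mul_comm _ (X i ^ m),
    mul_dvd_mul_iff_left (pow_ne_zero m (X_ne_zero i)), hunit.dvd_mul_left] at h

theorem X_dvd_of_X_pow_succ_dvd_pderiv_pderiv {i : σ} {m : ℕ} {g : MvPolynomial σ K}
    (h : X i ^ (m + 1) ∣ pderiv i (pderiv i (X i ^ (m + 2) * g))) : X i ∣ g := by
  obtain ⟨u, hu⟩ := (pderiv i).pow_dvd_map_of_pow_succ_dvd (dvd_mul_right (X i ^ (m + 2)) g)
  rw [hu] at h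
  refine X_dvd_of_X_pow_succ_dvd_pderiv (m := m + 1) ?_
  rw [hu, pow_succ]
  exact mul_dvd_mul_left _ (X_dvd_of_X_pow_succ_dvd_pderiv h)

end MvPolynomial

theorem X_pow_succ_dvd_of_X_pow_dvd_of_keller_of_symmetric {K : Type*} [Field K] [CharZero K]
    {n : ℕ} {F : Fin n → MvPolynomial (Fin n) K}
    (hKeller : IsUnit (Matrix.of fun i j : Fin n => pderiv j (F i)).det)
    (hsym : ∀ j k, pderiv k (F j) = pderiv j (F k))
    {i : Fin n} {c c' : K} {h : MvPolynomial (Fin n) K}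
    (hFi : F i = C c' * X i + X i ^ 2 * h + C c) {k : ℕ} (hk : X i ^ k ∣ h) :
    X i ^ (k + 1) ∣ h := by
  obtain ⟨g, rfl⟩ := hk
  replace hFi : F i = C c' * X i + X i ^ (k + 2) * g + C c := by rw [hFi]; ring
  have hcol : ∀ j ≠ i, X i ^ (k + 2) ∣ pderiv i (F j) := by
    intro j hj
    rw [hsym, hFi]
    simp [pderiv_X_of_ne hj.symm]
  have hdiag := (pderiv i).pow_dvd_map_diag_of_isUnit_det _ hKeller
    (pderiv_eq_zero_of_isUnit hKeller i) i hcol fun j hj l => by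
      rw [Matrix.of_apply, pderiv_pderiv_comm]
      exact (pderiv l).pow_dvd_map_of_pow_succ_dvd (hcol j hj)
  simp only [Matrix.of_apply, hFi, map_add, pderiv_C_mul, pderiv_X_self, mul_one, pderiv_C,
    add_zero, zero_add] at hdiag
  rw [pow_succ]
  exact mul_dvd_mul_left _ (X_dvd_of_X_pow_succ_dvd_pderiv_pderiv hdiag)

/-- Lemma (symdiag): if `F` is a Keller map with symmetric Jacobian and
`Fᵢ = c'·xᵢ + xᵢ²·h + c`, then `h = 0`. -/
theorem keller_symmetric_diagonal_component
    {K : Type*} [Field K] [CharZero K] {n : ℕ}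
    (F : Fin n → MvPolynomial (Fin n) K)
    (hKeller : IsUnit (Matrix.of fun i j : Fin n => pderiv j (F i)).det)
    (hsym : ∀ j k, pderiv k (F j) = pderiv j (F k))
    (i : Fin n) (c c' : K) (h : MvPolynomial (Fin n) K)
    (hFi : F i = C c' * X i + X i ^ 2 * h + C c) :
    h = 0 := by
  refine eq_zero_of_forall_X_pow_dvd (i := i) fun k => ?_
  induction k with
  | zero => simp
  | succ k ih => exact X_pow_succ_dvd_of_X_pow_dvd_of_keller_of_symmetric hKeller hsym hFi ih
end
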